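/- arXiv:2102.10675 — 5 statements merged into one kernel-verified Lean document; each statement's English description precedes it below -/
import Mathlib

section
/- For any K×K positive definite complex Hermitian matrix N, letting N₁ denote the diagonal matrix consisting of the diagonal entries of N, one has log det(I + N) − log det(N) ≥ log det(I + N₁) − log det(N₁). -/
/-!
Put `C = (N + 1)⁻¹`. The matrix `1 - C = N (N + 1)⁻¹` is positive definite with determinant
`det N / det (N + 1)`. By Hadamard's inequality this determinant is at most `∏ i, (1 - C i i)`,
and `C i i ≥ 1 / (N i i + 1)` because the diagonal of the inverse of a positive definite matrix
dominates the inverse of its diagonal. Hence `det N / det (N + 1) ≤ ∏ i, N i i / (N i i + 1)`,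
which is the claim after taking logarithms.
-/

open Matrix ComplexOrder

namespace Matrix.PosDef

variable {𝕜 : Type*} [RCLike 𝕜] {n : Type*} [Fintype n] [DecidableEq n]

lemma re_det_le_one_of_diag_eq_one {B : Matrix n n 𝕜} (hB : B.PosDef) (h : ∀ i, B i i = 1) :
    RCLike.re B.det ≤ 1 := by
  set μ := hB.1.eigenvalues
  have hsum : ∑ i, (μ i - 1) = 0 := by
    have htr := hB.1.trace_eq_sum_eigenvalues
    simp only [trace, diag, h, Finset.sum_const, Finset.card_univ, nsmul_eq_mul, mul_one] at htr
    rw [← RCLike.ofReal_sum, ← RCLike.ofReal_natCast, RCLike.ofReal_inj] at htr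
    simp only [Finset.sum_sub_distrib, Finset.sum_const, Finset.card_univ, nsmul_eq_mul, mul_one]
    exact sub_eq_zero.mpr htr.symm
  rw [hB.1.det_eq_prod_eigenvalues, ← RCLike.ofReal_prod, RCLike.ofReal_re]
  calc ∏ i, μ i ≤ ∏ i, Real.exp (μ i - 1) :=
        Finset.prod_le_prod (fun i _ => (hB.eigenvalues_pos i).le)
          fun i _ => by linarith [Real.add_one_le_exp (μ i - 1)]
    _ = 1 := by rw [← Real.exp_sum, hsum, Real.exp_zero]

/-- Hadamard's inequality. -/
lemma re_det_le_prod_re_diag {A : Matrix n n 𝕜} (hA : A.PosDef) :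
    RCLike.re A.det ≤ ∏ i, RCLike.re (A i i) := by
  set a : n → ℝ := fun i => RCLike.re (A i i)
  have ha : ∀ i, 0 < a i := fun i => (RCLike.pos_iff.mp hA.diag_pos).1
  set D : Matrix n n 𝕜 := diagonal fun i => ((√(a i))⁻¹ : ℝ) with hDdef
  have hD : Dᴴ = D := by simp [D, diagonal_conjTranspose]
  have hDunit : IsUnit D := by
    simp [D, isUnit_iff_isUnit_det, det_diagonal, Finset.prod_ne_zero_iff,
      (Real.sqrt_pos.2 (ha _)).ne']
  have hB : (Dᴴ * A * D).PosDef :=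
    hA.conjTranspose_mul_mul_same (mulVec_injective_iff_isUnit.mpr hDunit)
  have hdiag : ∀ i, (Dᴴ * A * D) i i = 1 := fun i => by
    rw [hD, hDdef, mul_diagonal, diagonal_mul, ← hA.1.coe_re_apply_self]
    have hsqrt : √(a i) ≠ 0 := (Real.sqrt_pos.2 (ha i)).ne'
    rw [← RCLike.ofReal_mul, ← RCLike.ofReal_mul, ← RCLike.ofReal_one, RCLike.ofReal_inj]
    field_simp
    exact (Real.sq_sqrt (ha i).le).symm
  have hscale : (∏ i, (√(a i))⁻¹) * (∏ i, (√(a i))⁻¹) = (∏ i, a i)⁻¹ := by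
    rw [← Finset.prod_mul_distrib, ← Finset.prod_inv_distrib]
    exact Finset.prod_congr rfl fun i _ => by rw [← mul_inv, Real.mul_self_sqrt (ha i).le]
  have := hB.re_det_le_one_of_diag_eq_one hdiag
  rwa [det_mul, det_mul, det_conjTranspose, hDdef, det_diagonal, ← RCLike.ofReal_prod,
    RCLike.star_def, RCLike.conj_ofReal, mul_comm, ← mul_assoc, ← RCLike.ofReal_mul, hscale,
    RCLike.re_ofReal_mul, inv_mul_le_iff₀ (Finset.prod_pos fun i _ => ha i), mul_one] at this

lemma one_le_re_mul_re_inv_apply_self {A : Matrix n n 𝕜} (hA : A.PosDef) (i : n) :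
    1 ≤ RCLike.re (A i i) * RCLike.re (A⁻¹ i i) := by
  have : Invertible A := hA.isUnit.invertible
  -- `!![A, 1; 1, A⁻¹]` has Schur complement `0`, so its principal `2 × 2` minors are `≥ 0`.
  have hblock : (fromBlocks A 1 1 A⁻¹).PosSemidef := by
    simpa using (hA.fromBlocks₁₁ (1 : Matrix n n 𝕜) A⁻¹).2 (by simpa using PosSemidef.zero)
  have h := (hblock.submatrix ![Sum.inl i, Sum.inr i]).det_nonneg
  simp only [det_fin_two, submatrix_apply, cons_val_zero, cons_val_one, fromBlocks_apply₁₁,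
    fromBlocks_apply₁₂, fromBlocks_apply₂₁, fromBlocks_apply₂₂, one_apply_eq, mul_one,
    sub_nonneg] at h
  rwa [← hA.1.coe_re_apply_self, ← hA.inv.1.coe_re_apply_self, ← RCLike.ofReal_mul,
    ← RCLike.ofReal_one, RCLike.ofReal_le_ofReal] at h

lemma one_sub_inv_add_one {N : Matrix n n 𝕜} (hN : N.PosDef) : (1 - (N + 1)⁻¹).PosDef := by
  have hN1 : (N + 1).PosDef := hN.add PosDef.one
  have hu : IsUnit (N + 1).det := (isUnit_iff_isUnit_det _).mp hN1.isUnit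
  set C := (N + 1)⁻¹
  have hCh : Cᴴ = C := hN1.inv.1
  have hrepr : 1 - C = Cᴴ * (N + Nᴴ * N) * C := by
    rw [hCh, hN.1.eq, ← mul_one_add, add_comm 1 N]
    calc 1 - C = C * N := by rw [← nonsing_inv_mul _ hu, mul_add, mul_one, add_sub_cancel_right]
      _ = C * (N * (N + 1)) * C := by rw [← mul_assoc, mul_assoc, mul_nonsing_inv _ hu, mul_one]
  rw [hrepr]
  exact (hN.add_posSemidef (posSemidef_conjTranspose_mul_self N)).conjTranspose_mul_mul_same
    (mulVec_injective_iff_isUnit.mpr hN1.inv.isUnit)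

lemma re_det_div_re_det_add_one_le {N : Matrix n n 𝕜} (hN : N.PosDef) :
    RCLike.re N.det / RCLike.re (N + 1).det ≤
      ∏ i, RCLike.re (N i i) / (RCLike.re (N i i) + 1) := by
  have hN1 : (N + 1).PosDef := hN.add PosDef.one
  have hM := hN.one_sub_inv_add_one
  have hdet : N.det = (1 - (N + 1)⁻¹).det * (N + 1).det := by
    rw [← det_mul, sub_mul, one_mul,
      nonsing_inv_mul _ ((isUnit_iff_isUnit_det _).mp hN1.isUnit), add_sub_cancel_right]
  have hdiag (i : n) :
      RCLike.re ((1 - (N + 1)⁻¹) i i) ≤ RCLike.re (N i i) / (RCLike.re (N i i) + 1) := by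
    have h := hN1.one_le_re_mul_re_inv_apply_self i
    have hpos : 0 < RCLike.re (N i i) := (RCLike.pos_iff.mp hN.diag_pos).1
    simp only [add_apply, one_apply_eq, map_add, RCLike.one_re] at h
    simp only [sub_apply, one_apply_eq, map_sub, RCLike.one_re]
    rw [le_div_iff₀ (by linarith)]
    nlinarith
  obtain ⟨hdet1_re, hdet1_im⟩ := RCLike.pos_iff.mp hN1.det_pos
  rw [hdet, RCLike.mul_re, hdet1_im, mul_zero, sub_zero, mul_div_cancel_right₀ _ hdet1_re.ne']
  exact hM.re_det_le_prod_re_diag.trans <|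
    Finset.prod_le_prod (fun i _ => (RCLike.pos_iff.mp hM.diag_pos).1.le) fun i _ => hdiag i

end Matrix.PosDef

/-- For a K×K positive definite (Hermitian) complex matrix `N`, with `N₁` its diagonal
part, `log det(I + N) − log det N ≥ log det(I + N₁) − log det N₁`
(determinants taken as their real parts, which are the actual positive real values). -/
theorem stmt0 (K : ℕ) (N : Matrix (Fin K) (Fin K) ℂ)
    (hN : N.PosDef) :
    Real.log ((Matrix.diagonal (fun i => N i i) + 1).det.re) -
        Real.log ((Matrix.diagonal (fun i => N i i)).det.re) ≤
      Real.log ((N + 1).det.re) - Real.log (N.det.re) := by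
  have hre : ∀ i, ((N i i).re : ℂ) = N i i := hN.1.coe_re_apply_self
  have hdiag (d : Fin K → ℝ) : (diagonal fun i => (d i : ℂ)).det.re = ∏ i, d i := by
    rw [det_diagonal, ← Complex.ofReal_prod, Complex.ofReal_re]
  have hD : diagonal (fun i => N i i) = diagonal fun i => ((N i i).re : ℂ) := by simp only [hre]
  have hD1 : diagonal (fun i => N i i) + 1 = diagonal fun i => (((N i i).re + 1 : ℝ) : ℂ) := by
    rw [← diagonal_one, diagonal_add]
    push_cast
    simp only [hre]
  have ha (i : Fin K) : 0 < (N i i).re := (RCLike.pos_iff.mp hN.diag_pos).1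
  have hdet := (RCLike.pos_iff.mp hN.det_pos).1
  have hdet1 := (RCLike.pos_iff.mp (hN.add PosDef.one).det_pos).1
  have hprod : 0 < ∏ i, (N i i).re := Finset.prod_pos fun i _ => ha i
  have hprod1 : 0 < ∏ i, ((N i i).re + 1) := Finset.prod_pos fun i _ => by linarith [ha i]
  have key := hN.re_det_div_re_det_add_one_le
  simp only [RCLike.re_to_complex] at key hdet hdet1
  rw [Finset.prod_div_distrib] at key
  have hlog := Real.log_le_log (div_pos hdet hdet1) key
  rw [Real.log_div hdet.ne' hdet1.ne', Real.log_div hprod.ne' hprod1.ne'] at hlog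
  rw [hD1, hD, hdiag, hdiag]
  linarith
end

section
/- For any K×K positive definite Hermitian matrix O, letting O₁ be the diagonal matrix of its diagonal entries, the trace of O₁⁻¹ is at most the trace of O⁻¹. -/
open Matrix ComplexOrder

private lemma diag_entry_pos {K : ℕ} {O : Matrix (Fin K) (Fin K) ℂ} (hO : O.PosDef)
    (i : Fin K) : 0 < (O i i).re := by
  have h := hO.re_dotProduct_pos (x := Pi.single i 1)
    (fun h => one_ne_zero (α := ℂ) (by simpa using congrFun h i))
  have he : star (Pi.single i 1 : Fin K → ℂ) = Pi.single i 1 := by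
    rw [← Pi.single_star]; simp
  rw [he] at h
  simpa [single_dotProduct, mulVec_single] using h

private lemma key {K : ℕ} {O : Matrix (Fin K) (Fin K) ℂ} (hO : O.PosDef) (i : Fin K) :
    ((O i i).re)⁻¹ ≤ ((O⁻¹) i i).re := by
  have hP : (O⁻¹).PosDef := hO.inv
  have hdet : IsUnit O.det := (Matrix.isUnit_iff_isUnit_det O).1 hO.isUnit
  have hOP : O * O⁻¹ = 1 := Matrix.mul_nonsing_inv O hdet
  have hPO : O⁻¹ * O = 1 := Matrix.nonsing_inv_mul O hdet
  set a : ℝ := ((O⁻¹) i i).re with ha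
  have hapos : 0 < a := diag_entry_pos hP i
  have hcpos : 0 < (O i i).re := diag_entry_pos hO i
  set e : Fin K → ℂ := Pi.single i 1 with he
  have hestar : star e = e := by rw [he, ← Pi.single_star]; simp
  set x : Fin K → ℂ := e - (a⁻¹ : ℂ) • ((O⁻¹) *ᵥ e) with hx
  have h0 : 0 ≤ (star x ⬝ᵥ O *ᵥ x).re := hO.posSemidef.re_dotProduct_nonneg x
  have h1 : star e ⬝ᵥ (O *ᵥ e) = O i i := by
    rw [hestar]; simp [he, single_dotProduct, mulVec_single]
  have h2 : star e ⬝ᵥ e = 1 := by rw [hestar]; simp [he, single_dotProduct]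
  have hermP : (O⁻¹)ᴴ = O⁻¹ := hP.isHermitian
  have h3 : star ((O⁻¹) *ᵥ e) ⬝ᵥ (O *ᵥ e) = 1 := by
    rw [star_mulVec, ← dotProduct_mulVec, hermP, mulVec_mulVec, hPO, one_mulVec, h2]
  have h4 : star ((O⁻¹) *ᵥ e) ⬝ᵥ e = (O⁻¹) i i := by
    rw [star_mulVec, ← dotProduct_mulVec, hermP, hestar]
    simp [he, single_dotProduct, mulVec_single]
  have hPiia : (O⁻¹) i i = (a : ℂ) := (hP.isHermitian.coe_re_apply_self i).symm
  have hxO : O *ᵥ x = O *ᵥ e - (a⁻¹ : ℂ) • e := by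
    rw [hx, mulVec_sub, mulVec_smul, mulVec_mulVec, hOP, one_mulVec]
  have hq : star x ⬝ᵥ (O *ᵥ x)
      = O i i - (a⁻¹ : ℂ) - (a⁻¹ : ℂ) + (a⁻¹ : ℂ) * (a⁻¹ : ℂ) * (a : ℂ) := by
    rw [hxO, hx]
    rw [star_sub, star_smul, sub_dotProduct, dotProduct_sub, dotProduct_sub,
      smul_dotProduct, smul_dotProduct, dotProduct_smul, dotProduct_smul,
      h1, h2, h3, h4, hPiia]
    ring_nf
    simp [Complex.conj_ofReal]
    ring
  rw [hq] at h0
  have h0' : 0 ≤ (O i i).re - a⁻¹ - a⁻¹ + a⁻¹ * a⁻¹ * a := by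
    have := h0
    simpa using this
  have : a⁻¹ ≤ (O i i).re := by
    have hne : a ≠ 0 := hapos.ne'
    have h5 : a⁻¹ * a⁻¹ * a = a⁻¹ := by field_simp
    linarith [h0']
  rw [inv_le_comm₀ hcpos hapos]
  exact this

/-- For a K×K positive definite Hermitian complex matrix `O`, with `O₁` its diagonal
part, `tr(O₁⁻¹) ≤ tr(O⁻¹)` (the traces are real; we compare their real parts). -/
theorem stmt1 (K : ℕ) (O : Matrix (Fin K) (Fin K) ℂ) (hO : O.PosDef) :
    ((Matrix.diagonal (fun i => O i i))⁻¹).trace.re ≤ (O⁻¹).trace.re := by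
  have hne : ∀ i, O i i ≠ 0 := fun i => by
    intro h
    have := diag_entry_pos hO i
    rw [h] at this; simp at this
  have hdiag : (Matrix.diagonal (fun i => O i i))⁻¹
      = Matrix.diagonal (fun i => (O i i)⁻¹) := by
    apply Matrix.inv_eq_right_inv
    rw [Matrix.diagonal_mul_diagonal]
    convert Matrix.diagonal_one with i
    exact mul_inv_cancel₀ (hne i)
  rw [hdiag, Matrix.trace_diagonal, Matrix.trace]
  rw [Complex.re_sum, Complex.re_sum]
  apply Finset.sum_le_sum
  intro i _
  have hOii : O i i = ((O i i).re : ℂ) := (hO.isHermitian.coe_re_apply_self i).symm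
  rw [hOii, ← Complex.ofReal_inv]
  simpa [Matrix.diag] using key hO i
end

section
/- For a K×K positive definite Hermitian matrix N with diagonal part N₁, the function g₁(x) = log det(xI + N₁) − log det(xI + N) is monotonically nonincreasing for x ≥ 0. -/
/-!
With `λᵢ` the eigenvalues of `N`, both determinants are products of linear factors, so
`g₁(x) = ∑ log (x + Nᵢᵢ) - ∑ log (x + λᵢ)` and `g₁'(x) = ∑ (x + Nᵢᵢ)⁻¹ - tr ((xI + N)⁻¹)`.
This is `≤ 0` because every positive definite `M` satisfies `1 / Mᵢᵢ ≤ (M⁻¹)ᵢᵢ`: expanding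
`0 ≤ (u - M⁻¹v)ᴴ M (u - M⁻¹v)` gives `2 Re (uᴴv) ≤ uᴴMu + vᴴM⁻¹v`, and one takes
`v = eᵢ`, `u = eᵢ / Mᵢᵢ`.
-/

open Matrix ComplexOrder

namespace Matrix

variable {n 𝕜 : Type*} [DecidableEq n] [RCLike 𝕜]

lemma PosDef.smul_one_add {A : Matrix n n 𝕜} (hA : A.PosDef) {x : ℝ} (hx : 0 ≤ x) :
    (x • (1 : Matrix n n 𝕜) + A).PosDef :=
  PosDef.posSemidef_add (PosSemidef.one.smul hx) hA

variable [Fintype n]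

lemma PosDef.two_mul_re_dotProduct_le {M : Matrix n n 𝕜} (hM : M.PosDef) (u v : n → 𝕜) :
    2 * RCLike.re (star u ⬝ᵥ v) ≤
      RCLike.re (star u ⬝ᵥ (M *ᵥ u)) + RCLike.re (star v ⬝ᵥ (M⁻¹ *ᵥ v)) := by
  have hdet : IsUnit M.det := (isUnit_iff_isUnit_det M).mp hM.isUnit
  have hMw : M *ᵥ (u - M⁻¹ *ᵥ v) = M *ᵥ u - v := by
    rw [mulVec_sub, mulVec_mulVec, mul_nonsing_inv M hdet, one_mulVec]
  have hstar : star (u - M⁻¹ *ᵥ v) = star u - star v ᵥ* M⁻¹ := by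
    rw [star_sub, star_mulVec, hM.isHermitian.inv]
  have hcross : (star v ᵥ* M⁻¹) ⬝ᵥ (M *ᵥ u) = star v ⬝ᵥ u := by
    rw [← dotProduct_mulVec, mulVec_mulVec, nonsing_inv_mul M hdet, one_mulVec]
  have hconj : RCLike.re (star v ⬝ᵥ u) = RCLike.re (star u ⬝ᵥ v) := by
    rw [star_dotProduct, RCLike.star_def, RCLike.conj_re]
  have h := hM.posSemidef.re_dotProduct_nonneg (u - M⁻¹ *ᵥ v)
  rw [hMw, hstar, sub_dotProduct, dotProduct_sub, dotProduct_sub, hcross,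
    ← dotProduct_mulVec] at h
  simp only [map_sub, hconj] at h
  linarith

lemma PosDef.inv_re_apply_self_le_re_inv_apply_self {M : Matrix n n 𝕜} (hM : M.PosDef) (i : n) :
    (RCLike.re (M i i))⁻¹ ≤ RCLike.re (M⁻¹ i i) := by
  set c := (RCLike.re (M i i))⁻¹
  have hcM : c * RCLike.re (M i i) = 1 := inv_mul_cancel₀ (RCLike.pos_iff.mp hM.diag_pos).1.ne'
  have h := hM.two_mul_re_dotProduct_le (Pi.single i (c : 𝕜)) (Pi.single i 1)
  simp only [Pi.star_single, RCLike.star_def, RCLike.conj_ofReal, dotProduct_single,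
    Pi.single_eq_same, mul_one, RCLike.ofReal_re, mulVec_single, op_smul_eq_smul, algebraMap_smul,
    dotProduct_smul, single_dotProduct, col_apply, RCLike.smul_re, RCLike.mul_re,
    RCLike.ofReal_im, zero_mul, sub_zero, star_one, MulOpposite.op_one, one_smul, one_mul] at h
  rw [hcM, mul_one] at h
  linarith

lemma PosDef.sum_inv_re_apply_self_le_re_trace_inv {M : Matrix n n 𝕜} (hM : M.PosDef) :
    ∑ i, (RCLike.re (M i i))⁻¹ ≤ RCLike.re M⁻¹.trace := by
  rw [trace, map_sum]
  exact Finset.sum_le_sum fun i _ => hM.inv_re_apply_self_le_re_inv_apply_self i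

lemma IsHermitian.det_cfc {A : Matrix n n 𝕜} (hA : A.IsHermitian) (f : ℝ → ℝ) :
    (cfc f A).det = ∏ i, (f (hA.eigenvalues i) : 𝕜) := by
  simp [hA.cfc_eq, IsHermitian.cfc, -Unitary.conjStarAlgAut_apply]

lemma IsHermitian.trace_cfc {A : Matrix n n 𝕜} (hA : A.IsHermitian) (f : ℝ → ℝ) :
    (cfc f A).trace = ∑ i, (f (hA.eigenvalues i) : 𝕜) := by
  simp [hA.cfc_eq, IsHermitian.cfc, -Unitary.conjStarAlgAut_apply]

lemma IsHermitian.cfc_const_add_eq_smul_one_add {A : Matrix n n 𝕜} (hA : A.IsHermitian) (x : ℝ) :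
    cfc (fun t => x + t) A = x • (1 : Matrix n n 𝕜) + A := by
  rw [cfc_const_add x (fun t => t) A, cfc_id' ℝ A, Algebra.algebraMap_eq_smul_one]

lemma IsHermitian.det_smul_one_add {A : Matrix n n 𝕜} (hA : A.IsHermitian) (x : ℝ) :
    (x • (1 : Matrix n n 𝕜) + A).det = ∏ i, ((x + hA.eigenvalues i : ℝ) : 𝕜) := by
  rw [← hA.cfc_const_add_eq_smul_one_add, hA.det_cfc]

lemma IsHermitian.trace_inv_smul_one_add {A : Matrix n n 𝕜} (hA : A.IsHermitian) (x : ℝ)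
    (hx : ∀ i, x + hA.eigenvalues i ≠ 0) :
    (x • (1 : Matrix n n 𝕜) + A)⁻¹.trace = ∑ i, (((x + hA.eigenvalues i)⁻¹ : ℝ) : 𝕜) := by
  have hspec : ∀ t ∈ spectrum ℝ A, x + t ≠ 0 := by
    rw [hA.spectrum_real_eq_range_eigenvalues]
    rintro - ⟨i, rfl⟩
    exact hx i
  rw [← hA.cfc_const_add_eq_smul_one_add, nonsing_inv_eq_ringInverse,
    ← cfc_inv (fun t => x + t) A hspec, hA.trace_cfc]

lemma IsHermitian.det_smul_one_add_diagonal {A : Matrix n n 𝕜} (hA : A.IsHermitian) (x : ℝ) :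
    (x • (1 : Matrix n n 𝕜) + diagonal (fun i => A i i)).det =
      ∏ i, ((x + RCLike.re (A i i) : ℝ) : 𝕜) := by
  have hdiag : x • (1 : Matrix n n 𝕜) + diagonal (fun i => A i i) =
      diagonal (fun i => ((x + RCLike.re (A i i) : ℝ) : 𝕜)) := by
    ext i j
    rcases eq_or_ne i j with rfl | hij
    · simp [hA.coe_re_apply_self, RCLike.real_smul_eq_coe_mul]
    · simp [hij]
  rw [hdiag, det_diagonal]

lemma PosDef.sum_inv_add_re_apply_self_le_sum_inv_add_eigenvalues {A : Matrix n n 𝕜}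
    (hA : A.PosDef) {x : ℝ} (hx : 0 ≤ x) :
    ∑ i, (x + RCLike.re (A i i))⁻¹ ≤ ∑ i, (x + hA.isHermitian.eigenvalues i)⁻¹ := by
  have h := (hA.smul_one_add hx).sum_inv_re_apply_self_le_re_trace_inv
  rw [hA.isHermitian.trace_inv_smul_one_add x fun i =>
      (add_pos_of_nonneg_of_pos hx (hA.eigenvalues_pos i)).ne',
    ← RCLike.ofReal_sum, RCLike.ofReal_re] at h
  simpa [RCLike.smul_re] using h

end Matrix

open Real in
lemma hasDerivAt_sum_log_add {ι : Type*} [Fintype ι] {a : ι → ℝ} {x : ℝ}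
    (h : ∀ i, x + a i ≠ 0) :
    HasDerivAt (fun y => ∑ i, log (y + a i)) (∑ i, (x + a i)⁻¹) x := by
  refine HasDerivAt.fun_sum fun i _ => ?_
  simpa using ((hasDerivAt_id x).add_const (a i)).log (h i)

open Real Set in
lemma antitoneOn_log_prod_add_sub_log_prod_add {ι κ : Type*} [Fintype ι] [Fintype κ]
    {a : ι → ℝ} {b : κ → ℝ} (ha : ∀ i, 0 < a i) (hb : ∀ j, 0 < b j)
    (hab : ∀ x, 0 < x → ∑ i, (x + a i)⁻¹ ≤ ∑ j, (x + b j)⁻¹) :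
    AntitoneOn (fun x => log (∏ i, (x + a i)) - log (∏ j, (x + b j))) (Ici 0) := by
  have hderiv : ∀ x ∈ Ici (0 : ℝ), HasDerivAt (fun y => ∑ i, log (y + a i) - ∑ j, log (y + b j))
      (∑ i, (x + a i)⁻¹ - ∑ j, (x + b j)⁻¹) x := fun x (hx : 0 ≤ x) =>
    (hasDerivAt_sum_log_add fun i => (add_pos_of_nonneg_of_pos hx (ha i)).ne').sub
      (hasDerivAt_sum_log_add fun j => (add_pos_of_nonneg_of_pos hx (hb j)).ne')
  have hanti : AntitoneOn (fun y => ∑ i, log (y + a i) - ∑ j, log (y + b j)) (Ici 0) := by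
    refine antitoneOn_of_hasDerivWithinAt_nonpos (convex_Ici 0)
      (f' := fun x => ∑ i, (x + a i)⁻¹ - ∑ j, (x + b j)⁻¹)
      (fun x hx => (hderiv x hx).continuousAt.continuousWithinAt)
      (fun x hx => (hderiv x (interior_subset hx)).hasDerivWithinAt) (fun x hx => ?_)
    rw [interior_Ici] at hx
    exact sub_nonpos.mpr (hab x hx)
  refine hanti.congr fun x (hx : 0 ≤ x) => ?_
  rw [log_prod fun i _ => (add_pos_of_nonneg_of_pos hx (ha i)).ne',
    log_prod fun j _ => (add_pos_of_nonneg_of_pos hx (hb j)).ne']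

/-- For a K×K positive definite Hermitian complex matrix `N` with diagonal part `N₁`,
the function `g₁(x) = log det(xI + N₁) − log det(xI + N)` is monotonically
nonincreasing on `[0, ∞)` (determinants taken via their real parts, which are the
actual positive real values). -/
theorem stmt3 (K : ℕ) (N : Matrix (Fin K) (Fin K) ℂ) (hN : N.PosDef) :
    AntitoneOn
      (fun x : ℝ =>
        Real.log (((x : ℂ) • (1 : Matrix (Fin K) (Fin K) ℂ) +
            Matrix.diagonal (fun i => N i i)).det.re) -
          Real.log (((x : ℂ) • (1 : Matrix (Fin K) (Fin K) ℂ) + N).det.re))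
      (Set.Ici 0) := by
  have hH := hN.isHermitian
  refine (antitoneOn_log_prod_add_sub_log_prod_add (fun i => (RCLike.pos_iff.mp hN.diag_pos).1)
    hN.eigenvalues_pos fun x hx =>
      hN.sum_inv_add_re_apply_self_le_sum_inv_add_eigenvalues hx.le).congr fun x _ => ?_
  simp only [Complex.coe_smul, hH.det_smul_one_add, hH.det_smul_one_add_diagonal,
    ← RCLike.ofReal_prod, ← RCLike.re_to_complex, RCLike.ofReal_re]
end

section
/- The vector of diagonal entries of a Hermitian matrix is majorized by the vector of its eigenvalues (Schur–Horn, majorization direction). -/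
/-!
Write `O = U diag(θ) Uᴴ` with `U` unitary. Then `O i i = ∑ j, |U i j|² θ j`, and `W i j = |U i j|²`
is doubly stochastic. For such `W` and any set `s` of rows, `∑ i ∈ s, (W θ) i = ∑ j, c j θ j` with
weights `0 ≤ c j ≤ 1` of total mass `#s`. Such a combination is at most `∑ j ∈ t, θ j` for a set `t`
of size `#s` maximizing that sum: a maximizing `t` is separated from its complement by a threshold
`μ`, and `∑ j, (c j - 𝟙[j ∈ t]) (θ j - μ) ≤ 0` termwise.
-/

open Finset

/-- Majorization `o ≺ θ` of vectors in `ℝ^K`: every partial sum of entries of `o`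
is dominated by a sum of equally many entries of `θ` (equivalently, the partial sums
of the decreasing rearrangement of `o` are bounded by those of `θ`),
and the total sums agree. -/
def Majorizes {K : ℕ} (o θ : Fin K → ℝ) : Prop :=
  (∀ s : Finset (Fin K), ∃ t : Finset (Fin K), t.card = s.card ∧
      ∑ i ∈ s, o i ≤ ∑ i ∈ t, θ i) ∧
    ∑ i, o i = ∑ i, θ i

open Matrix

section WeightedSums

variable {ι : Type*} {θ c : ι → ℝ} {t : Finset ι}

lemma le_of_forall_card_eq_sum_le (hmax : ∀ s : Finset ι, #s = #t → ∑ j ∈ s, θ j ≤ ∑ j ∈ t, θ j)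
    {j k : ι} (hj : j ∉ t) (hk : k ∈ t) : θ j ≤ θ k := by
  classical
  have hj' : j ∉ t.erase k := fun h => hj (mem_of_mem_erase h)
  have hswap := hmax (insert j (t.erase k)) (by
    rw [card_insert_of_notMem hj', card_erase_add_one hk])
  rw [sum_insert hj', sum_erase_eq_sub hk] at hswap
  linarith

lemma exists_threshold [Finite ι] (h : ∀ j ∉ t, ∀ k ∈ t, θ j ≤ θ k) :
    ∃ μ, (∀ k ∈ t, μ ≤ θ k) ∧ ∀ j ∉ t, θ j ≤ μ := by
  rcases t.eq_empty_or_nonempty with rfl | ht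
  · obtain ⟨M, hM⟩ := (Set.finite_range θ).bddAbove
    exact ⟨M, by simp, fun j _ => hM (Set.mem_range_self j)⟩
  · exact ⟨t.inf' ht θ, fun k hk => inf'_le θ hk, fun j hj => le_inf' ht θ (h j hj)⟩

lemma sum_mul_le_sum_of_threshold [Fintype ι] (hc0 : ∀ j, 0 ≤ c j) (hc1 : ∀ j, c j ≤ 1)
    (hsum : ∑ j, c j = #t) {μ : ℝ} (hμt : ∀ k ∈ t, μ ≤ θ k) (hμ : ∀ j ∉ t, θ j ≤ μ) :
    ∑ j, c j * θ j ≤ ∑ j ∈ t, θ j := by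
  classical
  have hterm : ∀ j, (c j - if j ∈ t then 1 else 0) * (θ j - μ) ≤ 0 := by
    intro j
    split_ifs with hj
    · exact mul_nonpos_of_nonpos_of_nonneg (by linarith [hc1 j]) (by linarith [hμt j hj])
    · exact mul_nonpos_of_nonneg_of_nonpos (by simpa using hc0 j) (by linarith [hμ j hj])
  have hexpand : ∑ j, (c j - if j ∈ t then 1 else 0) * (θ j - μ) =
      ∑ j, c j * θ j - ∑ j ∈ t, θ j - (∑ j, c j - #t) * μ := by
    simp only [sub_mul, mul_sub, sum_sub_distrib, ite_mul, one_mul, zero_mul, sum_ite_mem,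
      univ_inter, sum_const, nsmul_eq_mul, sum_mul]
  rw [hsum, sub_self, zero_mul, sub_zero] at hexpand
  linarith [sum_nonpos fun j (_ : j ∈ univ) => hterm j]

lemma exists_card_eq_sum_mul_le [Fintype ι] (θ : ι → ℝ) (hc0 : ∀ j, 0 ≤ c j)
    (hc1 : ∀ j, c j ≤ 1) {m : ℕ} (hm : m ≤ Fintype.card ι) (hsum : ∑ j, c j = m) :
    ∃ t : Finset ι, #t = m ∧ ∑ j, c j * θ j ≤ ∑ j ∈ t, θ j := by
  obtain ⟨t, ht, hmax⟩ := exists_max_image (univ.powersetCard m) (fun t => ∑ j ∈ t, θ j)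
    (powersetCard_nonempty.mpr (by simpa using hm))
  rw [mem_powersetCard_univ] at ht
  obtain ⟨μ, hμt, hμ⟩ := exists_threshold fun j hj k hk =>
    le_of_forall_card_eq_sum_le (fun s hs => hmax s (mem_powersetCard_univ.mpr (hs.trans ht))) hj hk
  exact ⟨t, ht, sum_mul_le_sum_of_threshold hc0 hc1 (ht ▸ hsum) hμt hμ⟩

end WeightedSums

theorem majorizes_mulVec_of_mem_doublyStochastic {K : ℕ} {W : Matrix (Fin K) (Fin K) ℝ}
    (hW : W ∈ doublyStochastic ℝ (Fin K)) (θ : Fin K → ℝ) : Majorizes (W *ᵥ θ) θ := by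
  refine ⟨fun s => ?_, sum_mulVec_of_mem_doublyStochastic hW⟩
  have hW0 : ∀ i j, 0 ≤ W i j := fun _ _ => nonneg_of_mem_doublyStochastic hW
  have hsum_s : ∑ i ∈ s, (W *ᵥ θ) i = ∑ j, (∑ i ∈ s, W i j) * θ j := by
    simp only [mulVec, dotProduct, sum_mul]
    exact sum_comm
  have hcol_s : ∀ j, ∑ i ∈ s, W i j ≤ 1 := fun j =>
    (sum_le_sum_of_subset_of_nonneg (subset_univ s) fun i _ _ => hW0 i j).trans_eq
      (sum_col_of_mem_doublyStochastic hW j)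
  have hmass : ∑ j, ∑ i ∈ s, W i j = #s := by
    rw [sum_comm]
    simp [sum_row_of_mem_doublyStochastic hW]
  obtain ⟨t, ht, hle⟩ := exists_card_eq_sum_mul_le θ (fun j => sum_nonneg fun i _ => hW0 i j)
    hcol_s (card_le_univ s) hmass
  exact ⟨t, ht, hsum_s ▸ hle⟩

lemma Matrix.of_norm_sq_mem_doublyStochastic {𝕜 n : Type*} [RCLike 𝕜] [Fintype n] [DecidableEq n]
    {U : Matrix n n 𝕜} (hU : U ∈ unitaryGroup n 𝕜) :
    of (fun i j => ‖U i j‖ ^ 2) ∈ doublyStochastic ℝ n := by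
  rw [mem_doublyStochastic_iff_sum]
  refine ⟨fun _ _ => sq_nonneg _, fun i => ?_, fun j => ?_⟩
  · have := congr_fun (congr_fun (mem_unitaryGroup_iff.mp hU) i) i
    simp only [mul_apply, star_apply, one_apply_eq, RCLike.star_def, RCLike.mul_conj] at this
    exact_mod_cast this
  · have := congr_fun (congr_fun (mem_unitaryGroup_iff'.mp hU) j) j
    simp only [mul_apply, star_apply, one_apply_eq, RCLike.star_def, RCLike.conj_mul] at this
    exact_mod_cast this

lemma Matrix.IsHermitian.re_diag_eq_mulVec_eigenvalues {𝕜 n : Type*} [RCLike 𝕜] [Fintype n]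
    [DecidableEq n] {A : Matrix n n 𝕜} (hA : A.IsHermitian) :
    (fun i => RCLike.re (A i i)) =
      of (fun i j => ‖(hA.eigenvectorUnitary : Matrix n n 𝕜) i j‖ ^ 2) *ᵥ hA.eigenvalues := by
  ext i
  conv_lhs => rw [hA.spectral_theorem, Unitary.conjStarAlgAut_apply]
  simp only [mul_apply, diagonal_apply, mul_ite, mul_zero, sum_ite_eq', mem_univ, if_true,
    star_apply, mulVec, dotProduct, of_apply, Function.comp_apply]
  rw [map_sum]
  refine sum_congr rfl fun j _ => ?_
  rw [mul_right_comm, RCLike.star_def, RCLike.mul_conj]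
  norm_cast

/-- Schur–Horn (majorization direction): the vector of diagonal entries of a
Hermitian matrix is majorized by the vector of its eigenvalues. -/
theorem stmt4 (K : ℕ) (O : Matrix (Fin K) (Fin K) ℂ) (hO : O.IsHermitian) :
    Majorizes (fun i => (O i i).re) hO.eigenvalues := by
  rw [show (fun i => (O i i).re) = _ from hO.re_diag_eq_mulVec_eigenvalues]
  exact majorizes_mulVec_of_mem_doublyStochastic
    (Matrix.of_norm_sq_mem_doublyStochastic hO.eigenvectorUnitary.2) _
end

section
/- Water-filling optimality for two levels: for ρ₁ ≥ ρ₂ > 0 and a budget C > 0, the maximizer of R(c₁,c₂) = Σ_j [log(1+ρ_j) − log(1+ρ_j 2^{−c_j})] subject to c₁ + c₂ = C, c₁, c₂ ≥ 0 is given by c_j = [log(ρ_j/ν)]⁺ where ν > 0 is chosen so that [log(ρ₁/ν)]⁺ + [log(ρ₂/ν)]⁺ = C. -/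
open Real

/-- Water-filling optimality for two parallel scalar Gaussian sub-channels:
for `ρ₁ ≥ ρ₂ > 0`, a budget `C > 0`, and a water level `ν > 0` with
`[log₂(ρ₁/ν)]⁺ + [log₂(ρ₂/ν)]⁺ = C`, the allocation `cⱼ = [log₂(ρⱼ/ν)]⁺`
maximizes `Σⱼ (log₂(1+ρⱼ) − log₂(1+ρⱼ 2^{−cⱼ}))` over all feasible allocations
`c₁, c₂ ≥ 0` with `c₁ + c₂ = C`. -/
theorem stmt7 (ρ₁ ρ₂ C ν : ℝ) (hρ₂ : 0 < ρ₂) (hρ : ρ₂ ≤ ρ₁) (hC : 0 < C)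
    (hν : 0 < ν)
    (hlevel : max (logb 2 (ρ₁ / ν)) 0 + max (logb 2 (ρ₂ / ν)) 0 = C) :
    ∀ c₁ c₂ : ℝ, 0 ≤ c₁ → 0 ≤ c₂ → c₁ + c₂ = C →
      (logb 2 (1 + ρ₁) - logb 2 (1 + ρ₁ * (2 : ℝ) ^ (-c₁))) +
          (logb 2 (1 + ρ₂) - logb 2 (1 + ρ₂ * (2 : ℝ) ^ (-c₂))) ≤
        (logb 2 (1 + ρ₁) -
            logb 2 (1 + ρ₁ * (2 : ℝ) ^ (-(max (logb 2 (ρ₁ / ν)) 0)))) +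
          (logb 2 (1 + ρ₂) -
            logb 2 (1 + ρ₂ * (2 : ℝ) ^ (-(max (logb 2 (ρ₂ / ν)) 0)))) := by
  intro c₁ c₂ hc₁ hc₂ hsum
  have hρ₁ : 0 < ρ₁ := lt_of_lt_of_le hρ₂ hρ
  set d₁ := max (logb 2 (ρ₁ / ν)) 0 with hd₁def
  set d₂ := max (logb 2 (ρ₂ / ν)) 0 with hd₂def
  have h2 : (0:ℝ) < 2 := two_pos
  have hx : 0 < ρ₁ * (2:ℝ) ^ (-c₁) := mul_pos hρ₁ (rpow_pos_of_pos h2 _)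
  have hy : 0 < ρ₂ * (2:ℝ) ^ (-c₂) := mul_pos hρ₂ (rpow_pos_of_pos h2 _)
  have hx' : 0 < ρ₁ * (2:ℝ) ^ (-d₁) := mul_pos hρ₁ (rpow_pos_of_pos h2 _)
  have hy' : 0 < ρ₂ * (2:ℝ) ^ (-d₂) := mul_pos hρ₂ (rpow_pos_of_pos h2 _)
  have hxy : (ρ₁ * (2:ℝ)^(-c₁)) * (ρ₂ * (2:ℝ)^(-c₂)) = ρ₁ * ρ₂ * (2:ℝ)^(-C) := by
    rw [← hsum, neg_add, Real.rpow_add h2]; ring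
  have hprod : (1 + ρ₁ * (2:ℝ)^(-d₁)) * (1 + ρ₂ * (2:ℝ)^(-d₂)) ≤
      (1 + ρ₁ * (2:ℝ)^(-c₁)) * (1 + ρ₂ * (2:ℝ)^(-c₂)) := by
    by_cases hcase : logb 2 (ρ₂ / ν) ≤ 0
    · -- boundary case : second channel gets nothing
      have hd₂' : d₂ = 0 := max_eq_right hcase
      have hd₁' : d₁ = C := by rw [hd₂'] at hlevel; linarith
      have hlogρ₁ : logb 2 (ρ₁ / ν) = C := by
        rcases le_or_gt (logb 2 (ρ₁ / ν)) 0 with h | h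
        · exfalso; rw [hd₁def, max_eq_right h] at hd₁'; linarith
        · rw [hd₁def, max_eq_left h.le] at hd₁'; exact hd₁'
      have h2C : (2:ℝ)^(-C) = ν / ρ₁ := by
        rw [← hlogρ₁, Real.rpow_neg h2.le,
          Real.rpow_logb h2 (by norm_num) (div_pos hρ₁ hν), inv_div]
      have hxC : ρ₁ * (2:ℝ)^(-C) = ν := by
        rw [h2C]; field_simp
      have hρ₂ν : ρ₂ ≤ ν := by
        by_contra hcon
        push_neg at hcon
        have : 0 < logb 2 (ρ₂ / ν) :=
          Real.logb_pos one_lt_two ((one_lt_div hν).2 hcon)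
        linarith
      have hxν : ν ≤ ρ₁ * (2:ℝ)^(-c₁) := by
        have hcle : c₁ ≤ C := by linarith
        have := Real.rpow_le_rpow_of_exponent_le (one_le_two (α := ℝ))
          (neg_le_neg hcle)
        calc ν = ρ₁ * (2:ℝ)^(-C) := hxC.symm
          _ ≤ ρ₁ * (2:ℝ)^(-c₁) := by
              exact mul_le_mul_of_nonneg_left this hρ₁.le
      have hxyB : (ρ₁ * (2:ℝ)^(-c₁)) * (ρ₂ * (2:ℝ)^(-c₂)) = ν * ρ₂ := by
        rw [hxy]; rw [mul_right_comm, hxC]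
      rw [hd₂', hd₁']
      have e1 : ρ₂ * (2:ℝ)^(-(0:ℝ)) = ρ₂ := by norm_num
      rw [e1, hxC]
      nlinarith [mul_nonneg (sub_nonneg.2 hxν)
        (sub_nonneg.2 (le_trans hρ₂ν hxν)), hx, hy, hxyB]
    · -- interior case : both levels active, value ν on each
      push_neg at hcase
      have hcase1 : 0 < logb 2 (ρ₁ / ν) := by
        have hle : ρ₂ / ν ≤ ρ₁ / ν := by
          gcongr
        calc (0:ℝ) < logb 2 (ρ₂ / ν) := hcase
          _ ≤ logb 2 (ρ₁ / ν) :=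
            Real.logb_le_logb_of_le one_lt_two (div_pos hρ₂ hν) hle
      have hd₁' : d₁ = logb 2 (ρ₁ / ν) := max_eq_left hcase1.le
      have hd₂' : d₂ = logb 2 (ρ₂ / ν) := max_eq_left hcase.le
      have e₁ : ρ₁ * (2:ℝ)^(-d₁) = ν := by
        rw [hd₁', Real.rpow_neg h2.le,
          Real.rpow_logb h2 (by norm_num) (div_pos hρ₁ hν), inv_div]
        field_simp
      have e₂ : ρ₂ * (2:ℝ)^(-d₂) = ν := by
        rw [hd₂', Real.rpow_neg h2.le,
          Real.rpow_logb h2 (by norm_num) (div_pos hρ₂ hν), inv_div]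
        field_simp
      have hxyA : (ρ₁ * (2:ℝ)^(-c₁)) * (ρ₂ * (2:ℝ)^(-c₂)) = ν * ν := by
        rw [hxy, ← hlevel, neg_add, Real.rpow_add h2]
        calc ρ₁ * ρ₂ * ((2:ℝ)^(-d₁) * (2:ℝ)^(-d₂))
            = (ρ₁ * (2:ℝ)^(-d₁)) * (ρ₂ * (2:ℝ)^(-d₂)) := by ring
          _ = ν * ν := by rw [e₁, e₂]
      rw [e₁, e₂]
      nlinarith [sq_nonneg (ρ₁ * (2:ℝ)^(-c₁) - ν), hx, hy, hxyA]
  have hlog : logb 2 ((1 + ρ₁ * (2:ℝ)^(-d₁)) * (1 + ρ₂ * (2:ℝ)^(-d₂))) ≤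
      logb 2 ((1 + ρ₁ * (2:ℝ)^(-c₁)) * (1 + ρ₂ * (2:ℝ)^(-c₂))) :=
    Real.logb_le_logb_of_le one_lt_two (by positivity) hprod
  rw [Real.logb_mul (by positivity) (by positivity),
    Real.logb_mul (by positivity) (by positivity)] at hlog
  linarith
end
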